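/- arXiv:1706.03953 — 2 statements merged into one kernel-verified Lean document; each statement's English description precedes it below -/
import Mathlib

section
/- Define the extended target density $\tilde{\pi}_N(k, \alpha_{1:P}^{1:N}, \theta) := \frac{\pi(\theta, \alpha_{1:P}^{k})}{N^P} \cdot \frac{\prod_{j=1}^N \prod_{i=1}^P m_i(\alpha_i^j \mid \theta, y_i)}{\prod_{i=1}^P m_i(\alpha_i^{k_i} \mid \theta, y_i)}$ for $k = (k_1, \dots, k_P) \in \{1, \dots, N\}^P$. Then integrating over the unselected particles $\alpha_{1:P}^{-k}$ yields the marginal $\tilde{\pi}_N(k, \alpha_{1:P}^k, \theta) = \pi(\theta, \alpha_{1:P}^k) / N^P$; in particular, summing over $k$ recovers the original posterior $\pi(\theta, \alpha_{1:P})$. -/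
open MeasureTheory
open scoped BigOperators

/-- The extended target density
`π̃_N(k, α_{1:P}^{1:N}, θ) = π(θ, α^k) / N^P · ψ^θ(α^{1:N}) / ∏ᵢ mᵢ(αᵢ^{kᵢ})`
where `ψ^θ(α^{1:N}) = ∏ⱼ ∏ᵢ mᵢ(αᵢ^ⱼ | θ, yᵢ)`. -/
noncomputable def piTilde {Θ A : Type*} (P N : ℕ)
    (pi : Θ → (Fin P → A) → ℝ) (m : Fin P → Θ → A → ℝ)
    (k : Fin P → Fin N) (α : Fin P → Fin N → A) (θ : Θ) : ℝ :=
  (pi θ (fun i => α i (k i)) / (N : ℝ) ^ P) *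
    ((∏ j : Fin N, ∏ i : Fin P, m i θ (α i j)) /
      ∏ i : Fin P, m i θ (α i (k i)))

/-! Once the selected particles are fixed, the ratio in `π̃_N` cancels their proposal densities,
leaving `π(θ, a) / N^P` times the product of the proposal densities of the unselected particles;
under the product measure each of these integrates to one. The sum over `k` has `N^P` equal terms. -/

theorem Fintype.prod_dite_eq_mul_prod_subtype_ne {ι M X : Type*} [Fintype ι] [DecidableEq ι]
    [CommMonoid M] (f : X → M) (k : ι) (x : X) (r : {j : ι // j ≠ k} → X) :
    ∏ j, f (if h : j = k then x else r ⟨j, h⟩) = f x * ∏ j, f (r j) := by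
  rw [Fintype.prod_eq_mul_prod_subtype_ne _ k, dif_pos rfl]
  exact congrArg _ (Finset.prod_congr rfl fun j _ => by rw [dif_neg j.2])

theorem integral_pi_pi_prod_prod {ι 𝕜 A : Type*} [Fintype ι] [RCLike 𝕜] {κ : ι → Type*}
    [∀ i, Fintype (κ i)] [MeasurableSpace A] (μ : Measure A) [SigmaFinite μ] (f : ι → A → 𝕜) :
    ∫ r : (i : ι) → κ i → A, ∏ i, ∏ j, f i (r i j)
        ∂(Measure.pi fun i => Measure.pi fun _ : κ i => μ)
      = ∏ i, (∫ x, f i x ∂μ) ^ Fintype.card (κ i) := by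
  rw [integral_fintype_prod_eq_prod (fun i (x : κ i → A) => ∏ j, f i (x j))]
  simp_rw [integral_fintype_prod_eq_pow]

theorem piTilde_insert {Θ A : Type*} {P N : ℕ} (pi : Θ → (Fin P → A) → ℝ)
    (m : Fin P → Θ → A → ℝ) (θ : Θ) (k : Fin P → Fin N) (a : Fin P → A)
    (hm : ∀ i, m i θ (a i) ≠ 0) (r : (i : Fin P) → ({j : Fin N // j ≠ k i} → A)) :
    piTilde P N pi m k (fun i j => if h : j = k i then a i else r i ⟨j, h⟩) θ
      = pi θ a / (N : ℝ) ^ P * ∏ i, ∏ j, m i θ (r i j) := by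
  simp only [piTilde, dif_pos]
  rw [Finset.prod_comm]
  simp_rw [Fintype.prod_dite_eq_mul_prod_subtype_ne (m _ θ), Finset.prod_mul_distrib]
  rw [mul_div_cancel_left₀ _ (Finset.prod_ne_zero_iff.mpr fun i _ => hm i)]

theorem sum_const_div_card {α : Type*} [Fintype α] [Nonempty α] (c : ℝ) :
    ∑ _x : α, c / Fintype.card α = c := by
  rw [Finset.sum_const, Finset.card_univ, nsmul_eq_mul,
    mul_div_cancel₀ _ (Nat.cast_ne_zero.mpr Fintype.card_ne_zero)]

theorem stmt_2_general {Θ A : Type*} [MeasurableSpace A] (μ : Measure A) [SigmaFinite μ]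
    (P N : ℕ)
    (pi : Θ → (Fin P → A) → ℝ) (m : Fin P → Θ → A → ℝ)
    (hm_pos : ∀ i θ a, 0 < m i θ a)
    (hm_prob : ∀ i θ, ∫ a, m i θ a ∂μ = 1)
    (θ : Θ) (k : Fin P → Fin N) (a : Fin P → A) :
    (∫ r : (i : Fin P) → ({j : Fin N // j ≠ k i} → A),
        piTilde P N pi m k
          (fun i j => if h : j = k i then a i else r i ⟨j, h⟩) θ
        ∂(Measure.pi fun i => Measure.pi fun _ : {j : Fin N // j ≠ k i} => μ))
      = pi θ a / (N : ℝ) ^ P ∧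
    (∑ _k' : Fin P → Fin N, pi θ a / (N : ℝ) ^ P) = pi θ a := by
  constructor
  · simp_rw [piTilde_insert pi m θ k a (fun i => (hm_pos i θ (a i)).ne'), integral_const_mul,
      integral_pi_pi_prod_prod, hm_prob, one_pow, Finset.prod_const_one, mul_one]
  · -- `k` witnesses `N ^ P ≠ 0`
    have : Nonempty (Fin P → Fin N) := ⟨k⟩
    simpa using sum_const_div_card (α := Fin P → Fin N) (pi θ a)

/-- Inserting the selected particle values `a` at the indices `k` and integrating the
extended target over the unselected particles yields the marginal
`π(θ, a) / N^P`; in particular, summing this marginal over all `N^P` index vectors `k`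
recovers the original posterior `π(θ, a)`. -/
theorem stmt_2 {Θ A : Type*} [MeasurableSpace A] (μ : Measure A) [SigmaFinite μ]
    (P N : ℕ) (hN : 0 < N)
    (pi : Θ → (Fin P → A) → ℝ) (m : Fin P → Θ → A → ℝ)
    (hm_pos : ∀ i θ a, 0 < m i θ a)
    (hm_meas : ∀ i θ, Measurable (m i θ))
    (hm_prob : ∀ i θ, ∫ a, m i θ a ∂μ = 1)
    (θ : Θ) (k : Fin P → Fin N) (a : Fin P → A) :
    (∫ r : (i : Fin P) → ({j : Fin N // j ≠ k i} → A),
        piTilde P N pi m k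
          (fun i j => if h : j = k i then a i else r i ⟨j, h⟩) θ
        ∂(Measure.pi fun i => Measure.pi fun _ : {j : Fin N // j ≠ k i} => μ))
      = pi θ a / (N : ℝ) ^ P ∧
    (∑ _k' : Fin P → Fin N, pi θ a / (N : ℝ) ^ P) = pi θ a :=
  stmt_2_general μ P N pi m hm_pos hm_prob θ k a
end

section
/- For the extended target $\tilde{\pi}_N(k, \alpha_{1:P}^{1:N}, \theta)$ and the proposal $q_N(k^*, \alpha^{*1:N}_{1:P}, \theta^* \mid k, \alpha_{1:P}^{1:N}, \theta) = q(\theta^* \mid \theta) \psi^{\theta^*}(\alpha^{*1:N}_{1:P}) \prod_{i=1}^P \bar{w}_i^{*k_i^*}$, the ratio of target to proposal at the proposed point equals $\widehat{p}_N(y \mid \theta^*) p(\theta^*) / (Z \, q(\theta^* \mid \theta))$, where $\widehat{p}_N(y \mid \theta^*) = \prod_{i=1}^P (N^{-1} \sum_{j=1}^N w_i^{*j})$ and $Z = p(y)$. Consequently the Metropolis–Hastings acceptance probability on the extended space reduces to $\min\{1, \frac{\widehat{p}_N(y \mid \theta^*) p(\theta^*) q(\theta \mid \theta^*)}{\widehat{p}_N(y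 \mid \theta) p(\theta) q(\theta^* \mid \theta)}\}$. -/
open scoped BigOperators

namespace Stmt3

variable {Θ A : Type*} (P N : ℕ)

/-- Importance weight `w_i(a; θ) = p(y_i | a, θ) p(a | θ) / m_i(a | θ, y_i)`. -/
noncomputable def w (pY pPrior m : Fin P → Θ → A → ℝ) (i : Fin P) (θ : Θ) (a : A) : ℝ :=
  pY i θ a * pPrior i θ a / m i θ a

/-- Posterior density `π(θ, α) = p(y | θ, α) p(α | θ) p(θ) / Z`
(with conditionally independent blocks). -/
noncomputable def post (pY pPrior : Fin P → Θ → A → ℝ) (pθ : Θ → ℝ) (Z : ℝ)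
    (θ : Θ) (α : Fin P → A) : ℝ :=
  (∏ i : Fin P, pY i θ (α i) * pPrior i θ (α i)) * pθ θ / Z

/-- Joint particle density `ψ^θ(α^{1:N}) = ∏ⱼ ∏ᵢ mᵢ(αᵢ^ʲ | θ, yᵢ)`. -/
noncomputable def psi (m : Fin P → Θ → A → ℝ) (θ : Θ) (α : Fin P → Fin N → A) : ℝ :=
  ∏ j : Fin N, ∏ i : Fin P, m i θ (α i j)

/-- Extended target density `π̃_N(k, α^{1:N}, θ)`. -/
noncomputable def piTilde (pY pPrior m : Fin P → Θ → A → ℝ) (pθ : Θ → ℝ) (Z : ℝ)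
    (k : Fin P → Fin N) (α : Fin P → Fin N → A) (θ : Θ) : ℝ :=
  post P pY pPrior pθ Z θ (fun i => α i (k i)) / (N : ℝ) ^ P *
    (psi P N m θ α / ∏ i : Fin P, m i θ (α i (k i)))

/-- PMMH proposal density
`q_N(k*, α*, θ* | k, α, θ) = q(θ* | θ) ψ^{θ*}(α*) ∏ᵢ w̄ᵢ^{*kᵢ*}`. -/
noncomputable def qN (pY pPrior m : Fin P → Θ → A → ℝ) (q : Θ → Θ → ℝ)
    (k' : Fin P → Fin N) (α' : Fin P → Fin N → A) (θ' : Θ) (θ : Θ) : ℝ :=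
  q θ' θ * psi P N m θ' α' *
    ∏ i : Fin P, (w P pY pPrior m i θ' (α' i (k' i)) /
      ∑ j : Fin N, w P pY pPrior m i θ' (α' i j))

/-- Likelihood estimator `p̂_N(y | θ) = ∏ᵢ N⁻¹ ∑ⱼ wᵢʲ`. -/
noncomputable def phat (pY pPrior m : Fin P → Θ → A → ℝ) (θ : Θ)
    (α : Fin P → Fin N → A) : ℝ :=
  ∏ i : Fin P, ((N : ℝ)⁻¹ * ∑ j : Fin N, w P pY pPrior m i θ (α i j))

/-! The extended target factors as `π̃_N = p̂_N(y | θ) p(θ) / Z · ψ^θ · ∏ᵢ w̄ᵢ^{kᵢ}`: dividing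
`π(θ, α_k)` by `∏ᵢ mᵢ(αᵢ^{kᵢ})` turns it into `∏ᵢ wᵢ^{kᵢ} p(θ) / Z`, and
`∏ᵢ wᵢ^{kᵢ} / N^P = p̂_N(y | θ) ∏ᵢ w̄ᵢ^{kᵢ}`. The proposal carries the same factor
`ψ^{θ*} ∏ᵢ w̄ᵢ^{*k*ᵢ}`, which cancels in the target/proposal ratio and in the acceptance ratio. -/

/-- The probability `∏ᵢ w̄ᵢ^{kᵢ}` of selecting the particle indices `k`. -/
noncomputable def selectionProb (pY pPrior m : Fin P → Θ → A → ℝ) (θ : Θ)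
    (α : Fin P → Fin N → A) (k : Fin P → Fin N) : ℝ :=
  ∏ i : Fin P, (w P pY pPrior m i θ (α i (k i)) / ∑ j : Fin N, w P pY pPrior m i θ (α i j))

section

variable {P N} {pY pPrior m : Fin P → Θ → A → ℝ}

lemma w_pos (hm_pos : ∀ i θ a, 0 < m i θ a) (hpY_pos : ∀ i θ a, 0 < pY i θ a)
    (hpPrior_pos : ∀ i θ a, 0 < pPrior i θ a) (i : Fin P) (θ : Θ) (a : A) :
    0 < w P pY pPrior m i θ a :=
  div_pos (mul_pos (hpY_pos i θ a) (hpPrior_pos i θ a)) (hm_pos i θ a)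

lemma psi_pos (hm_pos : ∀ i θ a, 0 < m i θ a) (θ : Θ) (α : Fin P → Fin N → A) :
    0 < psi P N m θ α :=
  Finset.prod_pos fun j _ => Finset.prod_pos fun i _ => hm_pos i θ (α i j)

lemma sum_w_pos (hw_pos : ∀ i θ a, 0 < w P pY pPrior m i θ a) (θ : Θ)
    (α : Fin P → Fin N → A) (i : Fin P) (j₀ : Fin N) :
    0 < ∑ j : Fin N, w P pY pPrior m i θ (α i j) :=
  Finset.sum_pos (fun _ _ => hw_pos i θ _) ⟨j₀, Finset.mem_univ _⟩

lemma selectionProb_pos (hw_pos : ∀ i θ a, 0 < w P pY pPrior m i θ a) (θ : Θ)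
    (α : Fin P → Fin N → A) (k : Fin P → Fin N) :
    0 < selectionProb P N pY pPrior m θ α k :=
  Finset.prod_pos fun i _ => div_pos (hw_pos i θ _) (sum_w_pos hw_pos θ α i (k i))

lemma piTilde_eq_prod_w (pθ : Θ → ℝ) (Z : ℝ) (k : Fin P → Fin N) (α : Fin P → Fin N → A)
    (θ : Θ) :
    piTilde P N pY pPrior m pθ Z k α θ
      = (∏ i : Fin P, w P pY pPrior m i θ (α i (k i))) / (N : ℝ) ^ P * pθ θ / Z *
          psi P N m θ α := by
  simp only [piTilde, post, w, Finset.prod_div_distrib]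
  ring

lemma phat_mul_selectionProb (θ : Θ) (α : Fin P → Fin N → A) (k : Fin P → Fin N)
    (hsum : ∀ i, ∑ j : Fin N, w P pY pPrior m i θ (α i j) ≠ 0) :
    phat P N pY pPrior m θ α * selectionProb P N pY pPrior m θ α k
      = (∏ i : Fin P, w P pY pPrior m i θ (α i (k i))) / (N : ℝ) ^ P := by
  have hfactor : ∀ i, (N : ℝ)⁻¹ * (∑ j : Fin N, w P pY pPrior m i θ (α i j)) *
      (w P pY pPrior m i θ (α i (k i)) / ∑ j : Fin N, w P pY pPrior m i θ (α i j))
        = w P pY pPrior m i θ (α i (k i)) / N := fun i => by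
    field_simp [hsum i]
  rw [phat, selectionProb, ← Finset.prod_mul_distrib, Finset.prod_congr rfl fun i _ => hfactor i,
    Finset.prod_div_distrib, Finset.prod_const, Finset.card_univ, Fintype.card_fin]

lemma piTilde_eq_phat_mul (hw_pos : ∀ i θ a, 0 < w P pY pPrior m i θ a) (pθ : Θ → ℝ) (Z : ℝ)
    (k : Fin P → Fin N) (α : Fin P → Fin N → A) (θ : Θ) :
    piTilde P N pY pPrior m pθ Z k α θ
      = phat P N pY pPrior m θ α * pθ θ / Z *
          (psi P N m θ α * selectionProb P N pY pPrior m θ α k) := by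
  rw [piTilde_eq_prod_w,
    ← phat_mul_selectionProb θ α k fun i => (sum_w_pos hw_pos θ α i (k i)).ne']
  ring

lemma qN_eq_mul (q : Θ → Θ → ℝ) (k' : Fin P → Fin N) (α' : Fin P → Fin N → A) (θ' θ : Θ) :
    qN P N pY pPrior m q k' α' θ' θ
      = q θ' θ * (psi P N m θ' α' * selectionProb P N pY pPrior m θ' α' k') :=
  mul_assoc _ _ _

end

theorem stmt_3 (pY pPrior m : Fin P → Θ → A → ℝ) (pθ : Θ → ℝ) (Z : ℝ) (q : Θ → Θ → ℝ)
    (hZ : Z ≠ 0)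
    (hm_pos : ∀ i θ a, 0 < m i θ a)
    (hpY_pos : ∀ i θ a, 0 < pY i θ a)
    (hpPrior_pos : ∀ i θ a, 0 < pPrior i θ a)
    (θ θ' : Θ) (k k' : Fin P → Fin N)
    (α α' : Fin P → Fin N → A) :
    piTilde P N pY pPrior m pθ Z k' α' θ' /
        qN P N pY pPrior m q k' α' θ' θ
      = phat P N pY pPrior m θ' α' * pθ θ' / (Z * q θ' θ) ∧
    min 1 ((piTilde P N pY pPrior m pθ Z k' α' θ' *
              qN P N pY pPrior m q k α θ θ') /
           (piTilde P N pY pPrior m pθ Z k α θ *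
              qN P N pY pPrior m q k' α' θ' θ))
      = min 1 ((phat P N pY pPrior m θ' α' * pθ θ' * q θ θ') /
               (phat P N pY pPrior m θ α * pθ θ * q θ' θ)) := by
  have hw_pos := w_pos hm_pos hpY_pos hpPrior_pos
  have hc : psi P N m θ α * selectionProb P N pY pPrior m θ α k ≠ 0 :=
    (mul_pos (psi_pos hm_pos θ α) (selectionProb_pos hw_pos θ α k)).ne'
  have hc' : psi P N m θ' α' * selectionProb P N pY pPrior m θ' α' k' ≠ 0 :=
    (mul_pos (psi_pos hm_pos θ' α') (selectionProb_pos hw_pos θ' α' k')).ne'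
  simp only [piTilde_eq_phat_mul hw_pos, qN_eq_mul]
  generalize psi P N m θ α * selectionProb P N pY pPrior m θ α k = c at hc ⊢
  generalize psi P N m θ' α' * selectionProb P N pY pPrior m θ' α' k' = c' at hc' ⊢
  constructor
  · rw [mul_div_mul_right _ _ hc', div_div]
  · congr 1
    rw [← mul_div_mul_right (phat P N pY pPrior m θ' α' * pθ θ' * q θ θ') _
      (div_ne_zero (mul_ne_zero hc hc') hZ)]
    ring

end Stmt3
end
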